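/- Let K ⊂ Γ be compact. Then there exist constants s₀ > 0 and b₀ > 0 such that f(s𝟙) ≥ f(μ) + b₀ for every real number s ≥ s₀ and every μ ∈ K. -/

import Mathlib

/- Positive partial derivatives make `f` strictly increasing for the coordinatewise order on the
convex set `Γ` (mean value theorem along segments). Bounding the compact set `K` coordinatewise by
`R·𝟙`, this gives `f(μ) ≤ f(R𝟙) < f((R+1)𝟙) ≤ f(s𝟙)` for `μ ∈ K` and `s ≥ R + 1`, so one may take
`s₀ = R + 1` and `b₀ = f((R+1)𝟙) - f(R𝟙)`. -/

open Filter Topology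

/-- The `i`-th partial derivative `fᵢ(x) = ∂f/∂λᵢ(x)`. -/
noncomputable def pd {m : ℕ} (f : (Fin m → ℝ) → ℝ) (x : Fin m → ℝ) (i : Fin m) : ℝ :=
  fderiv ℝ f x (Pi.single i 1)

/-- The Euclidean norm of a vector in `ℝ^m`. -/
noncomputable def eNorm {m : ℕ} (v : Fin m → ℝ) : ℝ :=
  Real.sqrt (∑ i, (v i) ^ 2)

/-- The unit normal `ν_x = Df(x)/|Df(x)|`. -/
noncomputable def nuv {m : ℕ} (f : (Fin m → ℝ) → ℝ) (x : Fin m → ℝ) : Fin m → ℝ :=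
  fun i => pd f x i / eNorm (pd f x)

section

variable {m : ℕ} {f : (Fin m → ℝ) → ℝ}

lemma fderiv_apply_eq_sum_pd (x v : Fin m → ℝ) :
    fderiv ℝ f x v = ∑ i, v i * pd f x i := by
  rw [← ContinuousLinearMap.coe_coe, LinearMap.pi_apply_eq_sum_univ]
  congr 1 with i
  simp only [pd, smul_eq_mul, ContinuousLinearMap.coe_coe]
  congr 2
  ext j
  simp [Pi.single_apply, eq_comm]

lemma fderiv_pos_of_pd_pos {x v : Fin m → ℝ} (hpd : ∀ i, 0 < pd f x i) (hv : 0 < v) :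
    0 < fderiv ℝ f x v := by
  obtain ⟨hv_nonneg, i, hvi⟩ := Pi.lt_def.1 hv
  rw [fderiv_apply_eq_sum_pd]
  exact Finset.sum_pos' (fun j _ => mul_nonneg (hv_nonneg j) (hpd j).le)
    ⟨i, Finset.mem_univ _, mul_pos hvi (hpd i)⟩

lemma strictMonoOn_of_pd_pos {Γ : Set (Fin m → ℝ)} (hΓopen : IsOpen Γ) (hΓconv : Convex ℝ Γ)
    (hf : DifferentiableOn ℝ f Γ) (hpd : ∀ x ∈ Γ, ∀ i, 0 < pd f x i) :
    StrictMonoOn f Γ := by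
  intro x hx y hy hxy
  let γ := AffineMap.lineMap (k := ℝ) x y
  have hγΓ : ∀ t ∈ Set.Icc (0 : ℝ) 1, γ t ∈ Γ := fun t ht => hΓconv.lineMap_mem hx hy ht
  have hderiv : ∀ t ∈ Set.Icc (0 : ℝ) 1,
      HasDerivAt (f ∘ γ) (fderiv ℝ f (γ t) (y - x)) t := fun t ht =>
    ((hf.differentiableAt (hΓopen.mem_nhds (hγΓ t ht))).hasFDerivAt).comp_hasDerivAt t
      AffineMap.hasDerivAt_lineMap
  obtain ⟨c, hc, hslope⟩ := exists_hasDerivAt_eq_slope (f ∘ γ) (fun t => fderiv ℝ f (γ t) (y - x))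
    zero_lt_one (fun t ht => (hderiv t ht).continuousAt.continuousWithinAt)
    (fun t ht => hderiv t (Set.Ioo_subset_Icc_self ht))
  have hpos : 0 < fderiv ℝ f (γ c) (y - x) :=
    fderiv_pos_of_pd_pos (hpd _ (hγΓ c (Set.Ioo_subset_Icc_self hc))) (sub_pos.2 hxy)
  simp only [hslope, Function.comp_apply, γ, AffineMap.lineMap_apply_one,
    AffineMap.lineMap_apply_zero, sub_zero, div_one, sub_pos] at hpos
  exact hpos

end

theorem stmt_13_general (m : ℕ) (hm : 2 ≤ m)
    (Γ : Set (Fin m → ℝ)) (f : (Fin m → ℝ) → ℝ)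
    (hΓopen : IsOpen Γ) (hΓconv : Convex ℝ Γ)
    (hΓpos : {x : Fin m → ℝ | ∀ i, 0 < x i} ⊆ Γ)
    (hfsmooth : ContDiffOn ℝ (⊤ : ℕ∞) f Γ)
    (hf1 : ∀ x ∈ Γ, ∀ i, 0 < pd f x i)
    (K : Set (Fin m → ℝ)) (hK : IsCompact K) (hKΓ : K ⊆ Γ) :
    ∃ s₀ : ℝ, 0 < s₀ ∧ ∃ b₀ : ℝ, 0 < b₀ ∧
      ∀ s : ℝ, s₀ ≤ s → ∀ μ ∈ K, f (fun _ => s) ≥ f μ + b₀ := by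
  have : Nonempty (Fin m) := ⟨⟨0, by omega⟩⟩
  have hmono : StrictMonoOn f Γ :=
    strictMonoOn_of_pd_pos hΓopen hΓconv (hfsmooth.differentiableOn (by simp)) hf1
  have hconst : ∀ r : ℝ, 0 < r → Function.const (Fin m) r ∈ Γ := fun r hr => hΓpos fun _ => hr
  obtain ⟨R, hR, hKR⟩ := hK.isBounded.exists_pos_norm_le
  have hR1 : (0 : ℝ) < R + 1 := by linarith
  have hgap : f (Function.const _ R) < f (Function.const _ (R + 1)) :=
    hmono (hconst R hR) (hconst _ hR1) (Function.const_lt_const.2 (lt_add_one R))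
  refine ⟨R + 1, hR1, _, sub_pos.2 hgap, fun s hs μ hμ => ?_⟩
  have hμR : f μ ≤ f (Function.const _ R) :=
    hmono.monotoneOn (hKΓ hμ) (hconst R hR) fun i =>
      (le_abs_self _).trans ((norm_le_pi_norm μ i).trans (hKR μ hμ))
  have hRs : f (Function.const _ (R + 1)) ≤ f (Function.const _ s) :=
    hmono.monotoneOn (hconst _ hR1) (hconst s (by linarith)) (Function.const_le_const.2 hs)
  change f (Function.const _ s) ≥ _
  linarith

/-- for compact `K ⊂ Γ` there are `s₀, b₀ > 0` with
`f(s·𝟙) ≥ f(μ) + b₀` for all `s ≥ s₀` and all `μ ∈ K`. -/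
theorem stmt_13 (m : ℕ) (hm : 2 ≤ m)
    (Γ : Set (Fin m → ℝ)) (f : (Fin m → ℝ) → ℝ)
    (hΓopen : IsOpen Γ) (hΓconv : Convex ℝ Γ) (hΓne : Γ.Nonempty)
    (hΓproper : Γ ≠ Set.univ)
    (hΓcone : ∀ t : ℝ, 0 < t → ∀ x ∈ Γ, t • x ∈ Γ)
    (hΓperm : ∀ π : Equiv.Perm (Fin m), ∀ x ∈ Γ, x ∘ π ∈ Γ)
    (hΓpos : {x : Fin m → ℝ | ∀ i, 0 < x i} ⊆ Γ)
    (hfsmooth : ContDiffOn ℝ (⊤ : ℕ∞) f Γ)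
    (hfsymm : ∀ π : Equiv.Perm (Fin m), ∀ x ∈ Γ, f (x ∘ π) = f x)
    (hf1 : ∀ x ∈ Γ, ∀ i, 0 < pd f x i)
    (hf2 : ConcaveOn ℝ Γ f)
    (K : Set (Fin m → ℝ)) (hK : IsCompact K) (hKΓ : K ⊆ Γ) :
    ∃ s₀ : ℝ, 0 < s₀ ∧ ∃ b₀ : ℝ, 0 < b₀ ∧
      ∀ s : ℝ, s₀ ≤ s → ∀ μ ∈ K, f (fun _ => s) ≥ f μ + b₀ :=
  stmt_13_general m hm Γ f hΓopen hΓconv hΓpos hfsmooth hf1 K hK hKΓ
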